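/- arXiv:0806.0439 — 6 statements merged into one kernel-verified Lean document; each statement's English description precedes it below -/
import Mathlib

section
/- Let K be a field, k ≥ 1, and in K⟨x,y⟩ set u = (xy)^k x, v = xy, w = yx, r = uv + uw + wu, s = v + w, f = u^3 + r, g = u^2 + s. Then [f,g] = [r,s]. -/
/-- In `K⟨x,y⟩`, with `u = (xy)^k x`, `v = xy`, `w = yx`, `r = uv + uw + wu`,
`s = v + w`, `f = u^3 + r`, `g = u^2 + s`, one has `[f,g] = [r,s]`. -/
theorem stmt_2 (K : Type*) [Field K] (k : ℕ) (hk : 1 ≤ k)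
    (x y : FreeAlgebra K (Fin 2)) (hx : x = FreeAlgebra.ι K 0) (hy : y = FreeAlgebra.ι K 1)
    (u v w r s f g : FreeAlgebra K (Fin 2))
    (hu : u = (x * y) ^ k * x) (hv : v = x * y) (hw : w = y * x)
    (hr : r = u * v + u * w + w * u) (hs : s = v + w)
    (hf : f = u ^ 3 + r) (hg : g = u ^ 2 + s) :
    f * g - g * f = r * s - s * r := by
  have key : v * u = u * w := by
    rw [hv, hw, hu]
    calc x * y * ((x * y) ^ k * x) = (x * y) ^ (k + 1) * x := by
          rw [pow_succ']; simp only [mul_assoc]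
      _ = (x * y) ^ k * x * (y * x) := by
          rw [pow_succ, mul_assoc, mul_assoc, mul_assoc]
  have expand : f * g - g * f - (r * s - s * r)
      = (u * (v * u) * u - u * (u * w) * u) + (u * w * (u * u) - v * u * (u * u)) := by
    rw [hf, hg, hr, hs]
    noncomm_ring
  have h0 : f * g - g * f - (r * s - s * r) = 0 := by
    rw [expand, key]
    noncomm_ring
  exact sub_eq_zero.mp h0
end

section
/- Let K be a field of characteristic 0, k ≥ 2, and in K⟨x,y⟩ set u = (xy)^k x, f = u^3 + uv + uw + wu and g = u^2 + v + w, where v = xy and w = yx. Then deg([f,g]) = 2k+5, which is strictly less than deg(g) = 4k+2 and strictly less than deg(f) = 6k+3. -/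
open scoped BigOperators

/-- The total degree of a nonzero element of the free associative algebra,
realized as the monoid algebra of the free monoid: the maximum length of a
monomial appearing with nonzero coefficient. -/
noncomputable def ncDeg {K : Type*} [Field K]
    (p : MonoidAlgebra K (FreeMonoid (Fin 2))) : ℕ :=
  p.coeff.support.sup fun m => m.length

/-!
The relation `u · yx = xy · u` for `u = (xy)^k x` makes most of the commutator cancel:
`[f, g] = u v v + u v w - v w u - w w u`, a combination of four distinct monomials of length
`2k + 5`. The monomials `u^3` of `f` and `u^2` of `g` are strictly longer than all the others,
so they determine the degrees `6k + 3` and `4k + 2`.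
-/

namespace FreeMonoid

variable {α : Type*}

theorem length_pow (a : FreeMonoid α) (n : ℕ) : (a ^ n).length = n * a.length := by
  induction n with
  | zero => simp
  | succ n ih => rw [pow_succ, length_mul, ih, Nat.succ_mul]

theorem getLast?_toList_mul_of (p : FreeMonoid α) (a : α) :
    (p * of a).toList.getLast? = some a := by
  simp [toList_mul]

end FreeMonoid

theorem semiconjBy_mul_pow_mul {M : Type*} [Monoid M] (a b : M) (k : ℕ) :
    SemiconjBy ((a * b) ^ k * a) (b * a) (a * b) := by
  rw [SemiconjBy, mul_assoc, ← mul_assoc a b a, ← mul_assoc, ← pow_succ, pow_succ', mul_assoc]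

theorem commutator_eq_of_semiconjBy {R : Type*} [Ring R] {u v w : R} (h : SemiconjBy u w v) :
    (u ^ 3 + u * v + u * w + w * u) * (u ^ 2 + v + w)
        - (u ^ 2 + v + w) * (u ^ 3 + u * v + u * w + w * u)
      = u * v * v + u * v * w - v * w * u - w * w * u := by
  rw [← sub_eq_zero]
  calc _ = (u * w - v * u) * (u ^ 2 + v + w) + u * (v * u - u * w) * u := by noncomm_ring
    _ = 0 := by simp [h.eq]

section ncDeg

variable {K : Type*} [Field K] {p q : MonoidAlgebra K (FreeMonoid (Fin 2))}
  {m : FreeMonoid (Fin 2)} {n : ℕ}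

theorem ncDeg_le_iff : ncDeg p ≤ n ↔ ∀ m ∈ p.coeff.support, m.length ≤ n :=
  Finset.sup_le_iff

theorem length_le_ncDeg (h : p.coeff m ≠ 0) : m.length ≤ ncDeg p :=
  Finset.le_sup (f := fun m => m.length) (Finsupp.mem_support_iff.mpr h)

theorem ncDeg_add_le_of_le (hp : ncDeg p ≤ n) (hq : ncDeg q ≤ n) : ncDeg (p + q) ≤ n := by
  classical
  exact ncDeg_le_iff.2 fun m hm =>
    (Finset.mem_union.1 (Finsupp.support_add hm)).elim (ncDeg_le_iff.1 hp m) (ncDeg_le_iff.1 hq m)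

theorem ncDeg_neg : ncDeg (-p) = ncDeg p := by
  simp [ncDeg, MonoidAlgebra.coeff_neg]

theorem ncDeg_sub_le_of_le (hp : ncDeg p ≤ n) (hq : ncDeg q ≤ n) : ncDeg (p - q) ≤ n := by
  rw [sub_eq_add_neg]
  exact ncDeg_add_le_of_le hp (ncDeg_neg.trans_le hq)

theorem ncDeg_of : ncDeg (MonoidAlgebra.of K _ m) = m.length := by
  simp [ncDeg]

theorem ncDeg_of_le (h : m.length ≤ n) : ncDeg (MonoidAlgebra.of K _ m) ≤ n := by
  rwa [ncDeg_of]

theorem ncDeg_of_add (hq : ncDeg q ≤ m.length) (hm : q.coeff m = 0) :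
    ncDeg (MonoidAlgebra.of K _ m + q) = m.length :=
  le_antisymm (ncDeg_add_le_of_le ncDeg_of.le hq)
    (length_le_ncDeg (by simp [MonoidAlgebra.coeff_add, hm]))

theorem ncDeg_of_add_of_lt (hq : ncDeg q < m.length) :
    ncDeg (MonoidAlgebra.of K _ m + q) = m.length :=
  ncDeg_of_add hq.le (by_contra fun h => (length_le_ncDeg h).not_gt hq)

end ncDeg

section Monomials

variable (K : Type*) [Field K] (k : ℕ)

local notation "X" => FreeMonoid.of (0 : Fin 2)
local notation "Y" => FreeMonoid.of (1 : Fin 2)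
local notation "U" => (X * Y) ^ k * X
local notation "𝔲" => MonoidAlgebra.of K (FreeMonoid (Fin 2)) U
local notation "𝔳" => MonoidAlgebra.of K (FreeMonoid (Fin 2)) (X * Y)
local notation "𝔴" => MonoidAlgebra.of K (FreeMonoid (Fin 2)) (Y * X)

theorem ncDeg_uvv_add_uvw_sub_vwu_sub_wwu :
    ncDeg (𝔲 * 𝔳 * 𝔳 + 𝔲 * 𝔳 * 𝔴 - 𝔳 * 𝔴 * 𝔲 - 𝔴 * 𝔴 * 𝔲) = 2 * k + 5 := by
  classical
  -- the leading word `u v v` is the only one of the four that ends in `y`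
  have hlast : ∀ {p q : FreeMonoid (Fin 2)}, p.toList.getLast? ≠ q.toList.getLast? → p ≠ q :=
    fun h e => h (congrArg _ e)
  have h₁ : U * (X * Y) * (Y * X) ≠ U * (X * Y) * (X * Y) :=
    hlast (by simp only [← mul_assoc, FreeMonoid.getLast?_toList_mul_of]; decide)
  have h₂ : X * Y * (Y * X) * U ≠ U * (X * Y) * (X * Y) :=
    hlast (by simp only [← mul_assoc, FreeMonoid.getLast?_toList_mul_of]; decide)
  have h₃ : Y * X * (Y * X) * U ≠ U * (X * Y) * (X * Y) :=
    hlast (by simp only [← mul_assoc, FreeMonoid.getLast?_toList_mul_of]; decide)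
  simp only [← map_mul, add_sub_assoc]
  rw [ncDeg_of_add]
  · simp [FreeMonoid.length_pow]
    ring
  · apply_rules [ncDeg_sub_le_of_le, ncDeg_of_le] <;> simp [FreeMonoid.length_pow] <;> omega
  · simp [MonoidAlgebra.coeff_sub, h₁, h₂, h₃]

theorem ncDeg_u_sq_add_v_add_w (hk : 0 < k) : ncDeg (𝔲 ^ 2 + 𝔳 + 𝔴) = 4 * k + 2 := by
  have hq : ncDeg (𝔳 + 𝔴) ≤ 2 := ncDeg_add_le_of_le (ncDeg_of_le le_rfl) (ncDeg_of_le le_rfl)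
  have hlt : 2 < (U ^ 2).length := by simp [FreeMonoid.length_pow]; omega
  rw [← map_pow, add_assoc, ncDeg_of_add_of_lt (hq.trans_lt hlt)]
  simp [FreeMonoid.length_pow]
  ring

theorem ncDeg_u_cube_add_uv_add_uw_add_wu (hk : 0 < k) :
    ncDeg (𝔲 ^ 3 + 𝔲 * 𝔳 + 𝔲 * 𝔴 + 𝔴 * 𝔲) = 6 * k + 3 := by
  simp only [← map_mul, ← map_pow, add_assoc]
  have hq : ncDeg (MonoidAlgebra.of K _ (U * (X * Y)) + (MonoidAlgebra.of K _ (U * (Y * X))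
      + MonoidAlgebra.of K _ (Y * X * U))) ≤ 2 * k + 3 := by
    apply_rules [ncDeg_add_le_of_le, ncDeg_of_le] <;> simp [FreeMonoid.length_pow] <;> omega
  have hlt : 2 * k + 3 < (U ^ 3).length := by simp [FreeMonoid.length_pow]; omega
  rw [ncDeg_of_add_of_lt (hq.trans_lt hlt)]
  simp [FreeMonoid.length_pow]
  ring

end Monomials

theorem stmt_4_general (K : Type*) [Field K] (k : ℕ) (hk : 2 ≤ k)
    (x y : MonoidAlgebra K (FreeMonoid (Fin 2)))
    (hx : x = MonoidAlgebra.of K (FreeMonoid (Fin 2)) (FreeMonoid.of 0))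
    (hy : y = MonoidAlgebra.of K (FreeMonoid (Fin 2)) (FreeMonoid.of 1))
    (u v w f g : MonoidAlgebra K (FreeMonoid (Fin 2)))
    (hu : u = (x * y) ^ k * x) (hv : v = x * y) (hw : w = y * x)
    (hf : f = u ^ 3 + u * v + u * w + w * u) (hg : g = u ^ 2 + v + w) :
    ncDeg (f * g - g * f) = 2 * k + 5 ∧
    ncDeg g = 4 * k + 2 ∧
    ncDeg f = 6 * k + 3 ∧
    ncDeg (f * g - g * f) < ncDeg g ∧
    ncDeg (f * g - g * f) < ncDeg f := by
  have hcomm : f * g - g * f = u * v * v + u * v * w - v * w * u - w * w * u := by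
    rw [hf, hg]
    exact commutator_eq_of_semiconjBy (by rw [hu, hv, hw]; exact semiconjBy_mul_pow_mul x y k)
  obtain rfl :
      u = MonoidAlgebra.of K _ ((FreeMonoid.of 0 * FreeMonoid.of 1) ^ k * FreeMonoid.of 0) := by
    rw [hu, hx, hy, map_mul, map_pow, map_mul]
  obtain rfl : v = MonoidAlgebra.of K _ (FreeMonoid.of 0 * FreeMonoid.of 1) := by
    rw [hv, hx, hy, map_mul]
  obtain rfl : w = MonoidAlgebra.of K _ (FreeMonoid.of 1 * FreeMonoid.of 0) := by
    rw [hw, hx, hy, map_mul]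
  have dfg : ncDeg (f * g - g * f) = 2 * k + 5 := hcomm ▸ ncDeg_uvv_add_uvw_sub_vwu_sub_wwu K k
  have dg : ncDeg g = 4 * k + 2 := hg ▸ ncDeg_u_sq_add_v_add_w K k (by omega)
  have df : ncDeg f = 6 * k + 3 := hf ▸ ncDeg_u_cube_add_uv_add_uw_add_wu K k (by omega)
  exact ⟨dfg, dg, df, by omega, by omega⟩

/-- For `k ≥ 2`, with `u = (xy)^k x`, `v = xy`, `w = yx`,
`f = u^3 + uv + uw + wu` and `g = u^2 + v + w` in `K⟨x,y⟩`, one has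
`deg([f,g]) = 2k+5 < deg(g) = 4k+2 < deg(f) = 6k+3`. -/
theorem stmt_4 (K : Type*) [Field K] [CharZero K] (k : ℕ) (hk : 2 ≤ k)
    (x y : MonoidAlgebra K (FreeMonoid (Fin 2)))
    (hx : x = MonoidAlgebra.of K (FreeMonoid (Fin 2)) (FreeMonoid.of 0))
    (hy : y = MonoidAlgebra.of K (FreeMonoid (Fin 2)) (FreeMonoid.of 1))
    (u v w f g : MonoidAlgebra K (FreeMonoid (Fin 2)))
    (hu : u = (x * y) ^ k * x) (hv : v = x * y) (hw : w = y * x)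
    (hf : f = u ^ 3 + u * v + u * w + w * u) (hg : g = u ^ 2 + v + w) :
    ncDeg (f * g - g * f) = 2 * k + 5 ∧
    ncDeg g = 4 * k + 2 ∧
    ncDeg f = 6 * k + 3 ∧
    ncDeg (f * g - g * f) < ncDeg g ∧
    ncDeg (f * g - g * f) < ncDeg f :=
  stmt_4_general K k hk x y hx hy u v w f g hu hv hw hf hg
end

section
/- Let m > n be coprime positive integers and ℓ ≥ 1. In K[u₁,u₂], the polynomials Φ_n(u₁,u₂) = Σ_{i=0}^{n−1} u₁^{ℓ(n−1−i)} u₂^{ℓi} and u₂^{ℓn−1}·Φ_{m−n}(u₁,u₂) are coprime. -/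
/-!
A common divisor `d` of `Φ_n` and `u₂^{ℓn−1} Φ_{m−n}` is prime to `u₂`, because
`Φ_n ≡ u₁^{ℓ(n−1)} mod u₂`; so `d` divides `Φ_n` and `Φ_{m−n}`, hence `x^n − y^n` and
`x^{m−n} − y^{m−n}` for `x = u₁^ℓ`, `y = u₂^ℓ`. Running the Euclidean algorithm on the exponents
(possible since `d` is prime to `y`) gives `d ∣ x − y`, and modulo `x − y` each `Φ_b` is
`b y^{b−1}`. As `n` and `m − n` are coprime, a Bézout combination shows that `d` divides a power
of `y`, so `d` is a unit.
-/

open MvPolynomial Finset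

/-- `Φ_b(u₁,u₂) = Σ_{i=0}^{b−1} u₁^{ℓ(b−1−i)} u₂^{ℓi}`. -/
noncomputable def Phi (K : Type*) [Field K] (l b : ℕ) : MvPolynomial (Fin 2) K :=
  ∑ i ∈ Finset.range b, X 0 ^ (l * (b - 1 - i)) * X 1 ^ (l * i)

section PowSubPow

variable {R : Type*} [CommRing R] [DecompositionMonoid R] {d x y : R}

theorem IsRelPrime.dvd_pow_mod_sub_pow_mod (h : IsRelPrime d y) {a b : ℕ}
    (ha : d ∣ x ^ a - y ^ a) (hb : d ∣ x ^ b - y ^ b) :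
    d ∣ x ^ (b % a) - y ^ (b % a) := by
  set q := a * (b / a)
  set r := b % a
  have hq : d ∣ x ^ q - y ^ q :=
    ha.trans (by simpa only [q, pow_mul] using sub_dvd_pow_sub_pow (x ^ a) (y ^ a) (b / a))
  have hsplit : x ^ b - y ^ b = x ^ r * (x ^ q - y ^ q) + y ^ q * (x ^ r - y ^ r) := by
    rw [← Nat.div_add_mod b a, pow_add, pow_add]
    ring
  exact (h.pow_right (n := q)).dvd_of_dvd_mul_left
    ((dvd_add_right (hq.mul_left _)).1 (hsplit ▸ hb))

theorem IsRelPrime.dvd_pow_gcd_sub_pow_gcd (h : IsRelPrime d y) {a b : ℕ}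
    (ha : d ∣ x ^ a - y ^ a) (hb : d ∣ x ^ b - y ^ b) :
    d ∣ x ^ a.gcd b - y ^ a.gcd b := by
  induction a, b using Nat.gcd.induction with
  | H0 b => simpa using hb
  | H1 a b _ ih => exact Nat.gcd_rec a b ▸ ih (h.dvd_pow_mod_sub_pow_mod ha hb) ha

theorem IsRelPrime.isUnit_of_dvd_geom_sum₂ (h : IsRelPrime d y) {a b : ℕ} (hab : a.Coprime b)
    (ha : d ∣ ∑ i ∈ range a, x ^ i * y ^ (a - 1 - i))
    (hb : d ∣ ∑ i ∈ range b, x ^ i * y ^ (b - 1 - i)) : IsUnit d := by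
  have hxy : d ∣ x - y := by
    have := h.dvd_pow_gcd_sub_pow_gcd (geom_sum₂_mul x y a ▸ ha.mul_right (x - y))
      (geom_sum₂_mul x y b ▸ hb.mul_right (x - y))
    rwa [hab.gcd_eq_one, pow_one, pow_one] at this
  have ha' := (dvd_geom_sum₂_iff_of_dvd_sub hxy).1 ha
  have hb' := (dvd_geom_sum₂_iff_of_dvd_sub hxy).1 hb
  obtain ⟨u, v, huv⟩ := hab.cast (R := R)
  have hy : d ∣ y ^ (a - 1 + (b - 1)) := by
    have := dvd_add ((ha'.mul_right (y ^ (b - 1))).mul_left u)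
      ((hb'.mul_right (y ^ (a - 1))).mul_left v)
    convert this using 1
    linear_combination (pow_add y (a - 1) (b - 1)) - y ^ (a - 1) * y ^ (b - 1) * huv
  exact h.pow_right dvd_rfl hy

end PowSubPow

theorem Phi_eq_geom_sum₂ (K : Type*) [Field K] (l b : ℕ) :
    Phi K l b = ∑ i ∈ range b, (X 0 ^ l) ^ i * (X 1 ^ l) ^ (b - 1 - i) := by
  rw [geom_sum₂_comm, Phi]
  refine sum_congr rfl fun i _ => ?_
  rw [← pow_mul, ← pow_mul, mul_comm]

theorem X_one_not_dvd_Phi (K : Type*) [Field K] {l n : ℕ} (hl : 0 < l) (hn : 0 < n) :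
    ¬ X 1 ∣ Phi K l n := by
  obtain ⟨k, rfl⟩ := Nat.exists_eq_add_one_of_ne_zero hn.ne'
  rw [Phi_eq_geom_sum₂, Nat.add_sub_cancel, geom_sum₂_succ_eq]
  intro h
  have h₀ : (X 1 : MvPolynomial (Fin 2) K) ∣ (X 0 ^ l) ^ k :=
    (dvd_add_left ((dvd_pow_self _ hl.ne').mul_right _)).1 h
  exact absurd (X_dvd_X.1 (X_prime.dvd_of_dvd_pow (X_prime.dvd_of_dvd_pow h₀))) (by decide)

/-- For coprime positive integers `m > n` and `ℓ ≥ 1`, the polynomials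
`Φ_n` and `u₂^{ℓn−1} Φ_{m−n}` are coprime in `K[u₁,u₂]`
(every common divisor is a unit). -/
theorem stmt_12 (K : Type*) [Field K] (l m n : ℕ)
    (hl : 0 < l) (hn : 0 < n) (hmn : n < m) (hcop : Nat.Coprime m n) :
    ∀ d : MvPolynomial (Fin 2) K,
      d ∣ Phi K l n → d ∣ X 1 ^ (l * n - 1) * Phi K l (m - n) → IsUnit d := by
  intro d hd₁ hd₂
  have hrel : IsRelPrime d (X 1) :=
    ((X_prime.irreducible.isRelPrime_iff_not_dvd).2
      fun h => X_one_not_dvd_Phi K hl hn (h.trans hd₁)).symm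
  have hd₂' : d ∣ Phi K l (m - n) := hrel.pow_right.dvd_of_dvd_mul_left hd₂
  have hcop' : n.Coprime (m - n) :=
    (Nat.coprime_sub_self_right hmn.le).2 hcop.symm
  rw [Phi_eq_geom_sum₂] at hd₁ hd₂'
  exact hrel.pow_right.isUnit_of_dvd_geom_sum₂ hcop' hd₁ hd₂'
end

section
/- Let K be a field of characteristic 0, k > 2, n ≥ 1, and g = (x+y^k)^n in K⟨x,y⟩. Then the homogeneous component of maximal degree of [y, (x+y^k)^n] equals [y, xy^{k(n−1)} + y^k x y^{k(n−2)} + ⋯ + y^{k(n−1)} x], and deg([y,(x+y^k)^n]) = k(n−1) + 2. -/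
open scoped BigOperators

/-- The homogeneous component of degree `d` of an element of the free algebra. -/
noncomputable def ncComponent {K : Type*} [Field K]
    (p : MonoidAlgebra K (FreeMonoid (Fin 2))) (d : ℕ) :
    MonoidAlgebra K (FreeMonoid (Fin 2)) :=
  MonoidAlgebra.ofCoeff (Finsupp.filter (fun m => m.length = d) p.coeff)

/-!
Write `(x + y^k)^n = y^(kn) + S + E`, where `S` collects the words containing `x` exactly once
(all of degree `k(n-1) + 1`) and `E` those containing `x` at least twice, of degree
`≤ k(n-2) + 2 ≤ k(n-1)` because `k ≥ 2`. Since `y` commutes with `y^(kn)`, the commutator is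
`[y, S] + [y, E]`, with `[y, S]` homogeneous of degree `k(n-1) + 2` and `deg [y, E] < k(n-1) + 2`.
Finally `[y, S] ≠ 0`: the word `y^(k(n-1)+1) x` occurs in `y S` with coefficient one, and not at
all in `S y`, whose words all end in `y`.
-/

open scoped Pointwise

namespace MonoidAlgebra

theorem mul_mem_supported {R M : Type*} [Semiring R] [Mul M] {s t : Set M}
    {p q : MonoidAlgebra R M} (hp : p ∈ supported R R s) (hq : q ∈ supported R R t) :
    p * q ∈ supported R R (s * t) := by
  classical
  rw [mem_supported] at hp hq ⊢
  grw [support_coeff_mul_subset p q, Finset.coe_mul, hp, hq]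

end MonoidAlgebra

section LinearTerm

variable {A : Type*} [Semiring A]

/-- The terms of `(x + y ^ k) ^ n` in which `x` occurs exactly once. -/
def linearTerm (x y : A) (k n : ℕ) : A :=
  ∑ i ∈ Finset.range n, y ^ (k * i) * x * y ^ (k * (n - 1 - i))

theorem linearTerm_succ (x y : A) (k n : ℕ) :
    linearTerm x y k (n + 1) = linearTerm x y k n * y ^ k + y ^ (k * n) * x := by
  simp only [linearTerm, Finset.sum_range_succ, Finset.sum_mul, Nat.add_sub_cancel,
    Nat.sub_self, Nat.mul_zero, pow_zero, mul_one]
  congr 1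
  refine Finset.sum_congr rfl fun i hi => ?_
  have := Finset.mem_range.mp hi
  rw [mul_assoc (_ * x), ← pow_add, ← Nat.mul_add_one, show n - 1 - i + 1 = n - i by omega,
    mul_assoc]

theorem linearTerm_mem_graded {S : Type*} [SetLike S A] [AddSubmonoidClass S A] (𝒜 : ℕ → S)
    [SetLike.GradedMonoid 𝒜] {x y : A} (hx : x ∈ 𝒜 1) (hy : y ∈ 𝒜 1) (k n : ℕ) :
    linearTerm x y k (n + 1) ∈ 𝒜 (k * n + 1) := by
  refine sum_mem fun i hi => ?_
  have hi : i ≤ n := Nat.lt_succ_iff.mp (Finset.mem_range.mp hi)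
  have hdeg : (k * i) • 1 + 1 + (k * (n + 1 - 1 - i)) • 1 = k * n + 1 := by
    simp only [smul_eq_mul, mul_one, Nat.add_sub_cancel, add_right_comm, ← Nat.mul_add,
      Nat.add_sub_cancel' hi]
  exact hdeg ▸ SetLike.mul_mem_graded (SetLike.mul_mem_graded (SetLike.pow_mem_graded _ hy) hx)
    (SetLike.pow_mem_graded _ hy)

end LinearTerm

theorem mul_sub_mul_mem_graded {A S : Type*} [Ring A] [SetLike S A] [AddSubgroupClass S A]
    (𝒜 : ℕ → S) [SetLike.GradedMonoid 𝒜] {y p : A} {d : ℕ} (hy : y ∈ 𝒜 1) (hp : p ∈ 𝒜 d) :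
    y * p - p * y ∈ 𝒜 (d + 1) :=
  sub_mem (add_comm 1 d ▸ SetLike.mul_mem_graded hy hp) (SetLike.mul_mem_graded hp hy)

namespace FreeMonoidAlgebra

open MonoidAlgebra

section Semiring

variable (R α : Type*) [Semiring R]

noncomputable abbrev homogeneousSubmodule (d : ℕ) :
    Submodule R (MonoidAlgebra R (FreeMonoid α)) :=
  supported R R {w | w.length = d}

noncomputable abbrev degreeLE (d : ℕ) : Submodule R (MonoidAlgebra R (FreeMonoid α)) :=
  supported R R {w | w.length ≤ d}

variable {R α}

theorem single_mem_homogeneousSubmodule (w : FreeMonoid α) (r : R) :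
    single w r ∈ homogeneousSubmodule R α w.length := by
  rw [mem_supported, coeff_single]
  exact (Finset.coe_subset.mpr Finsupp.support_single_subset).trans (by simp)

theorem coeff_eq_zero_of_mem_degreeLE {p : MonoidAlgebra R (FreeMonoid α)} {d : ℕ}
    (hp : p ∈ degreeLE R α d) {w : FreeMonoid α} (hw : d < w.length) : p.coeff w = 0 :=
  mem_supported'.mp hp w (not_le.mpr hw)

theorem homogeneousSubmodule_le_degreeLE (d : ℕ) :
    homogeneousSubmodule R α d ≤ degreeLE R α d :=
  supported_mono fun _ h => le_of_eq h

theorem degreeLE_mono {d e : ℕ} (h : d ≤ e) : degreeLE R α d ≤ degreeLE R α e :=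
  supported_mono fun _ hw => le_trans hw h

instance : SetLike.GradedMonoid (homogeneousSubmodule R α) where
  one_mem := single_mem_homogeneousSubmodule 1 1
  mul_mem _ _ _ _ hp hq := supported_mono
    (by rintro _ ⟨u, rfl, v, rfl, rfl⟩; exact FreeMonoid.length_mul u v) (mul_mem_supported hp hq)

instance : SetLike.GradedMonoid (degreeLE R α) where
  one_mem := homogeneousSubmodule_le_degreeLE 0 (single_mem_homogeneousSubmodule 1 1)
  mul_mem _ _ _ _ hp hq := supported_mono
    (by rintro _ ⟨u, hu, v, hv, rfl⟩; exact (FreeMonoid.length_mul u v).trans_le (add_le_add hu hv))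
    (mul_mem_supported hp hq)

theorem coeff_mul_single_of_mul_of {a b : α} (hab : a ≠ b) (p : MonoidAlgebra R (FreeMonoid α))
    (r : R) (u : FreeMonoid α) :
    (p * single (FreeMonoid.of b) r).coeff (u * FreeMonoid.of a) = 0 := by
  refine coeff_mul_single_of_forall_mul_ne _ _ fun v h => hab ?_
  have := congrArg FreeMonoid.toList h
  simp only [FreeMonoid.toList_mul, FreeMonoid.toList_of] at this
  simpa using (List.append_inj' this rfl).2.symm

end Semiring

section Ring

variable {R α : Type*} [Ring R]

theorem pow_add_pow_sub_linearTerm_mem_degreeLE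
    {x y : MonoidAlgebra R (FreeMonoid α)} (hx : x ∈ degreeLE R α 1) (hy : y ∈ degreeLE R α 1)
    {k : ℕ} (hk : 2 ≤ k) (n : ℕ) :
    (x + y ^ k) ^ (n + 1) - y ^ (k * (n + 1)) - linearTerm x y k (n + 1)
      ∈ degreeLE R α (k * n) := by
  induction n with
  | zero => simp [linearTerm]
  | succ n ih =>
    have hT := linearTerm_mem_graded (degreeLE R α) hx hy k n
    have hyk : y ^ k ∈ degreeLE R α k := by simpa using SetLike.pow_mem_graded k hy
    have hxyk : x + y ^ k ∈ degreeLE R α k := add_mem (degreeLE_mono (by omega) hx) hyk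
    have hstep :
        (x + y ^ k) ^ (n + 1 + 1) - y ^ (k * (n + 1 + 1)) - linearTerm x y k (n + 1 + 1)
          = linearTerm x y k (n + 1) * x + ((x + y ^ k) ^ (n + 1) - y ^ (k * (n + 1))
              - linearTerm x y k (n + 1)) * (x + y ^ k) := by
      rw [linearTerm_succ, pow_succ _ (n + 1), Nat.mul_succ k (n + 1), pow_add y]
      generalize (x + y ^ k) ^ (n + 1) = P, linearTerm x y k (n + 1) = T, y ^ (k * (n + 1)) = Y
      noncomm_ring
    rw [hstep]
    exact add_mem (degreeLE_mono (by rw [Nat.mul_succ]; omega) (SetLike.mul_mem_graded hT hx))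
      (Nat.mul_succ k n ▸ SetLike.mul_mem_graded ih hxyk)

theorem commutator_linearTerm_ne_zero [Nontrivial R] {a b : α} (hab : a ≠ b)
    {x y : MonoidAlgebra R (FreeMonoid α)} (hx : x = single (FreeMonoid.of a) 1)
    (hy : y = single (FreeMonoid.of b) 1) {k : ℕ} (hk : 1 ≤ k) (n : ℕ) :
    y * linearTerm x y k (n + 1) - linearTerm x y k (n + 1) * y ≠ 0 := by
  obtain ⟨j, rfl⟩ := Nat.exists_eq_add_of_le' hk
  have hsplit : y * linearTerm x y (j + 1) (n + 1) - linearTerm x y (j + 1) (n + 1) * y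
      = (y * linearTerm x y (j + 1) n * y ^ j - linearTerm x y (j + 1) n * y ^ (j + 1)
          - y ^ ((j + 1) * n) * x) * y + y ^ ((j + 1) * n + 1) * x := by
    rw [linearTerm_succ, pow_succ y j, pow_succ' y ((j + 1) * n)]
    noncomm_ring
  set w := FreeMonoid.of b ^ ((j + 1) * n + 1) * FreeMonoid.of a
  have hword : y ^ ((j + 1) * n + 1) * x = single w 1 := by
    rw [hx, hy, single_pow, single_mul_single, one_pow, mul_one]
  have hcoeff : (y * linearTerm x y (j + 1) (n + 1) - linearTerm x y (j + 1) (n + 1) * y).coeff w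
      = 1 := by
    rw [hsplit, hword, coeff_add, Finsupp.add_apply, hy, coeff_mul_single_of_mul_of hab,
      coeff_single, Finsupp.single_eq_same, zero_add]
  intro h
  rw [h, coeff_zero, Finsupp.zero_apply] at hcoeff
  exact zero_ne_one hcoeff

end Ring

end FreeMonoidAlgebra

open FreeMonoidAlgebra

section Degree

variable {K : Type*} [Field K] {p e : MonoidAlgebra K (FreeMonoid (Fin 2))} {d d' : ℕ}

theorem ncComponent_add_of_mem_degreeLE (hp : p ∈ homogeneousSubmodule K (Fin 2) d)
    (he : e ∈ degreeLE K (Fin 2) d') (hd : d' < d) : ncComponent (p + e) d = p := by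
  ext w
  rw [ncComponent, MonoidAlgebra.coeff_ofCoeff, Finsupp.filter_apply]
  split_ifs with hw
  · rw [MonoidAlgebra.coeff_add, Finsupp.add_apply,
      coeff_eq_zero_of_mem_degreeLE he (hw ▸ hd), add_zero]
  · exact (MonoidAlgebra.mem_supported'.mp hp w hw).symm

theorem ncDeg_add_of_mem_degreeLE (hp : p ∈ homogeneousSubmodule K (Fin 2) d) (hp0 : p ≠ 0)
    (he : e ∈ degreeLE K (Fin 2) d') (hd : d' < d) : ncDeg (p + e) = d := by
  have hpe : p + e ∈ degreeLE K (Fin 2) d :=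
    add_mem (homogeneousSubmodule_le_degreeLE d hp) (degreeLE_mono hd.le he)
  obtain ⟨w, hw⟩ := Finsupp.ne_iff.mp (MonoidAlgebra.coeff_injective.ne hp0)
  have hwd : w.length = d := MonoidAlgebra.mem_supported.mp hp (Finsupp.mem_support_iff.mpr hw)
  refine le_antisymm (Finset.sup_le fun w hw => hpe hw) (hwd ▸ Finset.le_sup ?_)
  rw [Finsupp.mem_support_iff, MonoidAlgebra.coeff_add, Finsupp.add_apply,
    coeff_eq_zero_of_mem_degreeLE he (hwd ▸ hd), add_zero]
  exact hw

end Degree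

theorem stmt_14_general (K : Type*) [Field K] (k n : ℕ)
    (hk : 2 < k) (hn : 1 ≤ n)
    (x y : MonoidAlgebra K (FreeMonoid (Fin 2)))
    (hx : x = MonoidAlgebra.of K (FreeMonoid (Fin 2)) (FreeMonoid.of 0))
    (hy : y = MonoidAlgebra.of K (FreeMonoid (Fin 2)) (FreeMonoid.of 1))
    (L S : MonoidAlgebra K (FreeMonoid (Fin 2)))
    (hL : L = y * (x + y ^ k) ^ n - (x + y ^ k) ^ n * y)
    (hS : S = ∑ i ∈ Finset.range n, y ^ (k * i) * x * y ^ (k * (n - 1 - i))) :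
    ncDeg L = k * (n - 1) + 2 ∧
    ncComponent L (ncDeg L) = y * S - S * y := by
  obtain ⟨m, rfl⟩ := Nat.exists_eq_add_of_le' hn
  rw [MonoidAlgebra.of_apply] at hx hy
  have hx1 : x ∈ homogeneousSubmodule K (Fin 2) 1 := hx ▸ single_mem_homogeneousSubmodule _ 1
  have hy1 : y ∈ homogeneousSubmodule K (Fin 2) 1 := hy ▸ single_mem_homogeneousSubmodule _ 1
  replace hS : S = linearTerm x y k (m + 1) := hS
  obtain ⟨E, hE, hpow⟩ : ∃ E ∈ degreeLE K (Fin 2) (k * m),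
      (x + y ^ k) ^ (m + 1) = y ^ (k * (m + 1)) + S + E := by
    rw [hS]
    exact ⟨_, pow_add_pow_sub_linearTerm_mem_degreeLE (homogeneousSubmodule_le_degreeLE 1 hx1)
      (homogeneousSubmodule_le_degreeLE 1 hy1) hk.le m, by abel⟩
  have hLsplit : L = (y * S - S * y) + (y * E - E * y) := by
    rw [hL, hpow, mul_add, mul_add, add_mul, add_mul, (Commute.self_pow y _).eq]
    abel
  have hS1 : S ∈ homogeneousSubmodule K (Fin 2) (k * m + 1) :=
    hS ▸ linearTerm_mem_graded _ hx1 hy1 k m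
  have hyS := mul_sub_mul_mem_graded _ hy1 hS1
  have hyS0 : y * S - S * y ≠ 0 :=
    hS ▸ commutator_linearTerm_ne_zero (by decide) hx hy (by omega) m
  have hyE := mul_sub_mul_mem_graded _ (homogeneousSubmodule_le_degreeLE 1 hy1) hE
  rw [hLsplit, ncDeg_add_of_mem_degreeLE hyS hyS0 hyE (by omega),
    ncComponent_add_of_mem_degreeLE hyS hyE (by omega), Nat.add_sub_cancel]
  exact ⟨rfl, rfl⟩

/-- For `k > 2`, `n ≥ 1`, the homogeneous component of maximal degree of
`[y, (x+y^k)^n]` equals `[y, Σ_{i=0}^{n-1} y^{k i} x y^{k(n-1-i)}]`, and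
`deg([y,(x+y^k)^n]) = k(n−1) + 2`. -/
theorem stmt_14 (K : Type*) [Field K] [CharZero K] (k n : ℕ)
    (hk : 2 < k) (hn : 1 ≤ n)
    (x y : MonoidAlgebra K (FreeMonoid (Fin 2)))
    (hx : x = MonoidAlgebra.of K (FreeMonoid (Fin 2)) (FreeMonoid.of 0))
    (hy : y = MonoidAlgebra.of K (FreeMonoid (Fin 2)) (FreeMonoid.of 1))
    (L S : MonoidAlgebra K (FreeMonoid (Fin 2)))
    (hL : L = y * (x + y ^ k) ^ n - (x + y ^ k) ^ n * y)
    (hS : S = ∑ i ∈ Finset.range n, y ^ (k * i) * x * y ^ (k * (n - 1 - i))) :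
    ncDeg L = k * (n - 1) + 2 ∧
    ncComponent L (ncDeg L) = y * S - S * y :=
  stmt_14_general K k n hk hn x y hx hy L S hL hS
end

section
/- Let K be a field of characteristic 0 and let c ≥ 2, k ≥ 1 be integers. Then there exists a polynomial p(z) ∈ K[z] of degree exactly k with p(0) = −1 satisfying the differential equation −(1 + kcz)p(z) + cz(1+z)p'(z) = 1. -/
open Polynomial

noncomputable def aSeq15 (K : Type*) [Field K] (c k : ℕ) : ℕ → K
  | 0 => -1
  | (n+1) => (c : K) * ((k : K) - n) / ((c : K) * (n+1) - 1) * aSeq15 K c k n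

lemma xderiv_coeff {K : Type*} [Field K] (q : K[X]) (m : ℕ) :
    (X * derivative q).coeff m = (m : K) * q.coeff m := by
  cases m with
  | zero => simp [mul_comm X (derivative q), coeff_mul_X_zero]
  | succ j => simp [coeff_X_mul, coeff_derivative]; ring

/-- For `c ≥ 2`, `k ≥ 1` and `K` a field of characteristic 0, there exists
`p(z) ∈ K[z]` of degree exactly `k` with `p(0) = −1` satisfying
`−(1 + kcz)p(z) + cz(1+z)p'(z) = 1`. -/
theorem stmt_15 (K : Type*) [Field K] [CharZero K] (c k : ℕ)
    (hc : 2 ≤ c) (hk : 1 ≤ k) :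
    ∃ p : K[X], p.degree = k ∧ p.coeff 0 = -1 ∧
      -(1 + C ((k * c : ℕ) : K) * X) * p
        + C ((c : ℕ) : K) * X * (1 + X) * derivative p = 1 := by
  set a : ℕ → K := aSeq15 K c k with ha
  have ha0 : a 0 = -1 := rfl
  have hden : ∀ n : ℕ, (c : K) * (n+1) - 1 ≠ 0 := by
    intro n
    have h2 : c * (n+1) ≠ 1 := by
      intro h
      have : c ≤ 1 := Nat.le_of_dvd one_pos ⟨n+1, h.symm⟩
      omega
    have h3 : ((c * (n+1) : ℕ) : K) ≠ 1 := by
      intro h; exact h2 (by exact_mod_cast h)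
    intro h
    apply h3
    push_cast
    linear_combination h
  have key : ∀ n : ℕ, ((c : K) * (n+1) - 1) * a (n+1) = (c : K) * ((k : K) - n) * a n := by
    intro n
    have hrec : a (n+1) = (c : K) * ((k : K) - n) / ((c : K) * (n+1) - 1) * a n := rfl
    rw [hrec, div_mul_eq_mul_div, mul_comm, div_mul_cancel₀ _ (hden n)]
  have hzero : ∀ n : ℕ, k < n → a n = 0 := by
    intro n hn
    induction n with
    | zero => omega
    | succ m ih =>
      have h0 : (c : K) * ((k : K) - m) * a m = 0 := by
        rcases Nat.lt_or_ge k m with h | h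
        · rw [ih h, mul_zero]
        · have hkm : k = m := by omega
          rw [hkm]; simp
      have h1 := (key m).trans h0
      exact mul_left_cancel₀ (hden m) (by rw [mul_zero]; exact h1)
  have hne : ∀ n : ℕ, n ≤ k → a n ≠ 0 := by
    intro n hn
    induction n with
    | zero => rw [ha0]; norm_num
    | succ m ih =>
      have hm : m ≤ k := by omega
      have ham := ih hm
      have hnum : (c : K) * ((k : K) - m) ≠ 0 := by
        apply mul_ne_zero
        · exact_mod_cast (show c ≠ 0 by omega)
        · intro h
          have hkm : (k : K) = m := sub_eq_zero.mp h
          exact (show k ≠ m by omega) (by exact_mod_cast hkm)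
      intro h
      have h2 := key m
      rw [h, mul_zero] at h2
      rcases mul_eq_zero.mp h2.symm with h1 | h1
      · exact hnum h1
      · exact ham h1
  set p : K[X] := ∑ n ∈ Finset.range (k+1), C (a n) * X ^ n with hp
  have hcoeff : ∀ n : ℕ, p.coeff n = a n := by
    intro n
    rw [hp, finset_sum_coeff]
    simp only [coeff_C_mul, coeff_X_pow, mul_ite, mul_one, mul_zero]
    rw [Finset.sum_ite_eq]
    by_cases h : n ∈ Finset.range (k+1)
    · rw [if_pos h]
    · rw [if_neg h]
      exact (hzero n (by simp at h; omega)).symm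
  refine ⟨p, ?_, ?_, ?_⟩
  · apply le_antisymm
    · rw [degree_le_iff_coeff_zero]
      intro m hm
      have : k < m := by exact_mod_cast hm
      rw [hcoeff]; exact hzero m this
    · apply le_degree_of_ne_zero
      rw [hcoeff]; exact hne k le_rfl
  · rw [hcoeff, ha0]
  · have expand : -(1 + C ((k * c : ℕ) : K) * X) * p
        + C ((c : ℕ) : K) * X * (1 + X) * derivative p
      = -p - C ((k * c : ℕ) : K) * (X * p)
        + (C ((c : ℕ) : K) * (X * derivative p)
          + C ((c : ℕ) : K) * (X * (X * derivative p))) := by ring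
    rw [expand]
    ext m
    cases m with
    | zero =>
      simp [coeff_one, mul_comm X p, coeff_mul_X_zero,
        mul_comm X (derivative p), mul_comm X (X * derivative p),
        coeff_mul_X_zero, hcoeff, ha0]
    | succ m =>
      have hxd : (X * (X * derivative p)).coeff (m+1) = (m : K) * p.coeff m := by
        rw [coeff_X_mul, xderiv_coeff]
      simp only [coeff_add, coeff_sub, coeff_neg, coeff_C_mul, coeff_X_mul,
        coeff_derivative, hxd, xderiv_coeff, coeff_one, Nat.succ_ne_zero, if_false, hcoeff]
      push_cast
      linear_combination key m
end

section
/- Let K be a field of characteristic 0, let a > b ≥ 1 with c = a − b > 1 and c dividing a+1, set k = (a+1)/c, and let p(z) ∈ K[z] satisfy −(1+kcz)p(z) + cz(1+z)p'(z) = 1. Define f = y·p(x^a y^b) and g = xy(1 + x^a y^b) in K[x,y]. Then the Jacobian J(f,g) = (∂f/∂x)(∂g/∂y) − (∂f/∂y)(∂g/∂x) equals y. -/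
open MvPolynomial

/-- With `c = a − b > 1` dividing `a+1`, `k = (a+1)/c`, and `p` satisfying
`−(1+kcz)p + cz(1+z)p' = 1`, the polynomials `f = y·p(x^a y^b)` and
`g = xy(1 + x^a y^b)` have Jacobian `J(f,g) = y`. -/
theorem stmt_16 (K : Type*) [Field K] [CharZero K] (a b c k : ℕ)
    (hb : 1 ≤ b) (hab : b < a) (hc : c = a - b) (hc1 : 1 < c)
    (hdvd : c ∣ a + 1) (hk : k = (a + 1) / c)
    (p : Polynomial K)
    (hp : -(1 + Polynomial.C ((k * c : ℕ) : K) * Polynomial.X) * p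
        + Polynomial.C ((c : ℕ) : K) * Polynomial.X * (1 + Polynomial.X)
          * Polynomial.derivative p = 1)
    (f g : MvPolynomial (Fin 2) K)
    (hf : f = X 1 * Polynomial.aeval (X 0 ^ a * X 1 ^ b) p)
    (hg : g = X 0 * X 1 * (1 + X 0 ^ a * X 1 ^ b)) :
    pderiv 0 f * pderiv 1 g - pderiv 1 f * pderiv 0 g = X 1 := by
  have hkc : k * c = a + 1 := by rw [hk]; exact Nat.div_mul_cancel hdvd
  obtain ⟨n, rfl⟩ : ∃ n, b = n + 1 := ⟨b - 1, by omega⟩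
  obtain ⟨m, rfl⟩ : ∃ m, a = n + 1 + c := ⟨0, by omega⟩
  clear hb hab hc hc1 hk
  set u : MvPolynomial (Fin 2) K := X 0 ^ (n + 1 + c) * X 1 ^ (n + 1) with hu
  set P : MvPolynomial (Fin 2) K := Polynomial.aeval u p with hP
  set P' : MvPolynomial (Fin 2) K := Polynomial.aeval u (Polynomial.derivative p) with hP'
  have R : -(1 + C ((k * c : ℕ) : K) * u) * P + C ((c : ℕ) : K) * u * (1 + u) * P' = 1 := by
    have := congrArg (Polynomial.aeval u) hp
    simpa [map_add, map_mul, map_neg, map_one, Polynomial.aeval_C, algebraMap_eq] using this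
  have h0u : pderiv 0 u = C ((n + 1 + c : ℕ) : K) * X 0 ^ (n + c) * X 1 ^ (n + 1) := by
    rw [hu]
    simp [pderiv_mul, pderiv_pow, pderiv_X_self, pderiv_X_of_ne (by decide : (1:Fin 2) ≠ 0)]
    ring
  have h1u : pderiv 1 u = C ((n + 1 : ℕ) : K) * X 0 ^ (n + 1 + c) * X 1 ^ n := by
    rw [hu]
    simp [pderiv_mul, pderiv_pow, pderiv_X_self, pderiv_X_of_ne (by decide : (0:Fin 2) ≠ 1)]
    ring
  have h0P : pderiv 0 P = P' * pderiv 0 u := by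
    rw [hP, Derivation.map_aeval, smul_eq_mul, hP']
  have h1P : pderiv 1 P = P' * pderiv 1 u := by
    rw [hP, Derivation.map_aeval, smul_eq_mul, hP']
  rw [hf, hg]
  simp only [pderiv_mul, pderiv_X_self, pderiv_X_of_ne (by decide : (1:Fin 2) ≠ 0),
    pderiv_X_of_ne (by decide : (0:Fin 2) ≠ 1), map_add, map_one, ← hu, ← hP,
    h0P, h1P, h0u, h1u, Derivation.map_one_eq_zero]
  rw [hkc] at R
  rw [hu] at R ⊢
  push_cast at R ⊢
  simp only [map_add, map_one, map_ofNat] at R ⊢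
  linear_combination (X 1 : MvPolynomial (Fin 2) K) * R
end
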